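/- arXiv:2412.09904 — 3 statements merged into one kernel-verified Lean document; each statement's English description precedes it below -/
import Mathlib

section
/- Let n be a positive multiple of 4, and let a ∈ F_2^n with wt(a) = r, 1 ≤ r ≤ n-1. If r is odd then Σ_{x ∈ F_2^n, wt(x)=n/2} (-1)^{x·a} = 0; if r = 2j then Σ_{x ∈ F_2^n, wt(x)=n/2} (-1)^{x·a} = (-1)^j C(n, n/2) C(n/2, j) / C(n, 2j). -/
/-!
The sum of `(-1)^(x·a)` over the words `x` of weight `k` is the coefficient of `X^k` in
`∏ i, (1 + (-1)^(a i) X) = (1 - X)^r (1 + X)^(n - r)`, i.e. the Krawtchouk number `K_k(r)`.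
Summing this over all `a` of weight `r` and exchanging the two sums (the pairing is symmetric)
gives `C(n, r) K_m(r) = C(n, m) K_r(m)`. For `n = 2m` the right-hand factor is the coefficient of
`X^r` in `(1 - X)^m (1 + X)^m = (1 - X^2)^m`, which is `0` for odd `r` and `(-1)^j C(m, j)` for
`r = 2j`.
-/

/-- Hamming weight of a binary vector. -/
def hw {n : ℕ} (x : Fin n → ZMod 2) : ℕ :=
  (Finset.univ.filter (fun i => x i ≠ 0)).card

open Polynomial Finset

lemma neg_one_pow_val_add (u v : ZMod 2) :
    (-1 : ℤ) ^ (u + v).val = (-1) ^ u.val * (-1) ^ v.val := by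
  revert u v; decide

lemma neg_one_pow_val_sum {ι : Type*} (s : Finset ι) (f : ι → ZMod 2) :
    (-1 : ℤ) ^ (∑ i ∈ s, f i).val = ∏ i ∈ s, (-1 : ℤ) ^ (f i).val := by
  classical
  induction s using Finset.induction_on with
  | empty => simp
  | insert a s ha ih => rw [sum_insert ha, prod_insert ha, neg_one_pow_val_add, ih]

lemma hw_eq_sum_val {n : ℕ} (x : Fin n → ZMod 2) : hw x = ∑ i, (x i).val := by
  rw [hw, card_filter]
  refine sum_congr rfl fun i _ => ?_
  obtain h | h : x i = 0 ∨ x i = 1 := by generalize x i = u; revert u; decide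
  all_goals simp [h, ZMod.val_one]

lemma hw_le {n : ℕ} (x : Fin n → ZMod 2) : hw x ≤ n :=
  (card_filter_le _ _).trans_eq (by simp)

lemma sum_neg_one_pow_val_mul_X_pow_val (u : ZMod 2) :
    ∑ t : ZMod 2, C ((-1 : ℤ) ^ (t * u).val) * X ^ t.val = if u = 0 then 1 + X else 1 - X := by
  rw [show (univ : Finset (ZMod 2)) = {0, 1} from rfl, sum_pair zero_ne_one]
  obtain rfl | rfl : u = 0 ∨ u = 1 := by revert u; decide
  · simp [ZMod.val_one]
  · simp [ZMod.val_one, sub_eq_add_neg]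

theorem sum_neg_one_pow_dot_mul_X_pow_hw {n : ℕ} (a : Fin n → ZMod 2) :
    ∑ x : Fin n → ZMod 2, C ((-1 : ℤ) ^ (∑ i, x i * a i).val) * X ^ hw x
      = (1 - X) ^ hw a * (1 + X) ^ (n - hw a) := by
  have card_zero : #(univ.filter fun i => a i = 0) = n - hw a := by
    have := card_filter_add_card_filter_not (s := univ) (p := fun i => a i ≠ 0)
    simp only [card_univ, Fintype.card_fin, not_not] at this
    rw [hw]; omega
  calc _ = ∑ x : Fin n → ZMod 2, ∏ i, C ((-1 : ℤ) ^ (x i * a i).val) * X ^ (x i).val := by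
        refine sum_congr rfl fun x _ => ?_
        rw [prod_mul_distrib, ← map_prod, ← neg_one_pow_val_sum, prod_pow_eq_pow_sum, hw_eq_sum_val]
    _ = ∏ i, ∑ t : ZMod 2, C ((-1 : ℤ) ^ (t * a i).val) * X ^ t.val := by
        rw [Fintype.prod_sum]
    _ = ∏ i, if a i = 0 then 1 + X else 1 - X := by simp only [sum_neg_one_pow_val_mul_X_pow_val]
    _ = _ := by
        rw [prod_ite, prod_const, prod_const, card_zero, mul_comm]
        rfl

noncomputable def krawtchouk (n k w : ℕ) : ℤ := ((1 - X) ^ w * (1 + X) ^ (n - w) : ℤ[X]).coeff k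

def sphereCharSum {n : ℕ} (k : ℕ) (a : Fin n → ZMod 2) : ℤ :=
  ∑ x ∈ univ.filter (fun x : Fin n → ZMod 2 => hw x = k), (-1 : ℤ) ^ (∑ i, x i * a i).val

theorem sphereCharSum_eq_krawtchouk {n : ℕ} (k : ℕ) (a : Fin n → ZMod 2) :
    sphereCharSum k a = krawtchouk n k (hw a) := by
  have h := congrArg (coeff · k) (sum_neg_one_pow_dot_mul_X_pow_hw a)
  simp only [finsetSum_coeff, coeff_C_mul_X_pow] at h
  rw [krawtchouk, ← h, sphereCharSum, sum_filter]
  simp only [eq_comm]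

theorem card_filter_hw_eq (n k : ℕ) :
    #(univ.filter fun x : Fin n → ZMod 2 => hw x = k) = n.choose k := by
  have h := sphereCharSum_eq_krawtchouk k (0 : Fin n → ZMod 2)
  simpa [sphereCharSum, krawtchouk, hw, coeff_one_add_X_pow] using h

theorem sum_sphereCharSum (n k w : ℕ) :
    ∑ a ∈ univ.filter (fun a : Fin n → ZMod 2 => hw a = w), sphereCharSum k a
      = n.choose w * krawtchouk n k w := by
  rw [sum_congr rfl fun a ha => by rw [sphereCharSum_eq_krawtchouk, (mem_filter.1 ha).2],
    sum_const, card_filter_hw_eq, nsmul_eq_mul]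

theorem choose_mul_krawtchouk_comm (n m r : ℕ) :
    n.choose r * krawtchouk n m r = n.choose m * krawtchouk n r m := by
  rw [← sum_sphereCharSum, ← sum_sphereCharSum]
  unfold sphereCharSum
  rw [sum_comm]
  simp only [mul_comm]

lemma coeff_one_sub_X_pow (m k : ℕ) : ((1 - X : ℤ[X]) ^ m).coeff k = (-1) ^ k * m.choose k := by
  have neg_X_pow (b : ℕ) : (-X : ℤ[X]) ^ b = C ((-1) ^ b) * X ^ b := by
    rw [neg_eq_neg_one_mul, mul_pow, C_pow, C_neg, C_1]
  rw [sub_eq_neg_add, add_pow]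
  simp only [finsetSum_coeff, one_pow, mul_one, coeff_mul_natCast, neg_X_pow, coeff_C_mul_X_pow,
    ite_mul, zero_mul, sum_ite_eq, mem_range]
  split_ifs with h
  · rfl
  · rw [Nat.choose_eq_zero_of_lt (by omega), Nat.cast_zero, mul_zero]

theorem krawtchouk_add_self (m r : ℕ) :
    krawtchouk (m + m) r m = if Even r then (-1 : ℤ) ^ (r / 2) * m.choose (r / 2) else 0 := by
  have h : ((1 - X) ^ m * (1 + X) ^ m : ℤ[X]) = expand ℤ 2 ((1 - X) ^ m) := by
    rw [← mul_pow, map_pow, map_sub, map_one, expand_X]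
    ring
  rw [krawtchouk, Nat.add_sub_cancel, h, coeff_expand two_pos, coeff_one_sub_X_pow]
  simp only [even_iff_two_dvd]

theorem hadamard_graph_eigenvalue_general (n : ℕ) (hn4 : 4 ∣ n)
    (a : Fin n → ZMod 2) (r : ℕ) (ha : hw a = r) :
    (Odd r →
      ∑ x ∈ Finset.univ.filter (fun x : Fin n → ZMod 2 => hw x = n / 2),
          (-1 : ℤ) ^ (∑ i, x i * a i).val = 0) ∧
    (∀ j : ℕ, r = 2 * j →
      ((∑ x ∈ Finset.univ.filter (fun x : Fin n → ZMod 2 => hw x = n / 2),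
          (-1 : ℤ) ^ (∑ i, x i * a i).val : ℤ) : ℚ)
        = (-1 : ℚ) ^ j * (n.choose (n / 2)) * ((n / 2).choose j) / (n.choose (2 * j))) := by
  have hn : n = n / 2 + n / 2 := by omega
  have hK_half := krawtchouk_add_self (n / 2) r
  rw [← hn] at hK_half
  have key : (n.choose r : ℤ) * sphereCharSum (n / 2) a
      = n.choose (n / 2) * if Even r then (-1 : ℤ) ^ (r / 2) * (n / 2).choose (r / 2) else 0 := by
    rw [sphereCharSum_eq_krawtchouk, ha, choose_mul_krawtchouk_comm, hK_half]
  have hchoose : 0 < n.choose r := Nat.choose_pos (ha ▸ hw_le a)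
  unfold sphereCharSum at key
  constructor
  · intro hodd
    rw [if_neg (Nat.not_even_iff_odd.2 hodd), mul_zero] at key
    exact (mul_eq_zero.1 key).resolve_left (by positivity)
  · rintro j rfl
    rw [if_pos (even_two_mul j), Nat.mul_div_cancel_left j two_pos] at key
    rw [eq_div_iff (by positivity)]
    have := congrArg (fun z : ℤ => (z : ℚ)) key
    push_cast at this ⊢
    linear_combination this

/-- Eigenvalues of the Hadamard graph `H_n` (`4 | n`): for `a` of weight `r`,
`1 ≤ r ≤ n-1`, the character sum over weight-`n/2` vectors vanishes for odd `r`
and equals `(-1)^j C(n,n/2) C(n/2,j) / C(n,2j)` for `r = 2j`. -/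
theorem hadamard_graph_eigenvalue (n : ℕ) (hn4 : 4 ∣ n) (hn : 0 < n)
    (a : Fin n → ZMod 2) (r : ℕ) (ha : hw a = r) (hr1 : 1 ≤ r) (hrn : r ≤ n - 1) :
    (Odd r →
      ∑ x ∈ Finset.univ.filter (fun x : Fin n → ZMod 2 => hw x = n / 2),
          (-1 : ℤ) ^ (∑ i, x i * a i).val = 0) ∧
    (∀ j : ℕ, r = 2 * j →
      ((∑ x ∈ Finset.univ.filter (fun x : Fin n → ZMod 2 => hw x = n / 2),
          (-1 : ℤ) ^ (∑ i, x i * a i).val : ℤ) : ℚ)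
        = (-1 : ℚ) ^ j * (n.choose (n / 2)) * ((n / 2).choose j) / (n.choose (2 * j))) :=
  hadamard_graph_eigenvalue_general n hn4 a r ha
end

section
/- For t ≥ 1 and 0 ≤ j ≤ ⌊t/2⌋ (with 4j+2 ≤ 4t-1), the absolute values of consecutive odd/even Krawtchouk values coincide: |K_{2t}^{4t-1}(4j+2)| = |K_{2t}^{4t-1}(4j+1)|. -/
/-!
`K_ℓ^n(r)` is the coefficient of `X^ℓ` in `(1 - X)^r (1 + X)^(n - r)`. Multiplying this generating
polynomial by `1 - X` or by `1 + X` gives Pascal-type recurrences in `(n, ℓ, r)`, and its reflection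
`X^n P(1/X) = (-1)^r P(X)` forces `K_ℓ^{2ℓ}(r) = 0` for odd `r`. With `n = 4t - 2`, `ℓ = 2t - 1` and
`r = 4j + 1`, the recurrences express `K_{2t}^{4t-1}(4j+2)` and `K_{2t}^{4t-1}(4j+1)` as
`K_{2t}^{4t-2}(4j+1) ∓ K_{2t-1}^{4t-2}(4j+1)`, and the second term vanishes.
-/

/-- Binary Krawtchouk polynomial `K_ℓ^n(r) = ∑_{i=0}^ℓ (-1)^i C(r,i) C(n-r, ℓ-i)`. -/
def binKraw (n ℓ r : ℕ) : ℤ :=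
  ∑ i ∈ Finset.range (ℓ + 1), (-1 : ℤ) ^ i * (r.choose i) * ((n - r).choose (ℓ - i))

open Polynomial

namespace Polynomial

theorem coeff_one_sub_X_pow {R : Type*} [CommRing R] (r i : ℕ) :
    ((1 - X : R[X]) ^ r).coeff i = (-1) ^ i * r.choose i := by
  have hterm (m : ℕ) : (-X : R[X]) ^ m * 1 ^ (r - m) * (r.choose m : R[X]) =
      C ((-1 : R) ^ m * r.choose m) * X ^ m := by
    rw [neg_pow, C_mul, C_pow, map_neg, map_one, one_pow, mul_one, ← C_eq_natCast]
    ring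
  rw [sub_eq_neg_add, add_pow, Finset.sum_congr rfl fun m _ => hterm m, finsetSum_coeff]
  simp only [coeff_C_mul_X_pow]
  rw [Finset.sum_ite_eq]
  split_ifs with h
  · rfl
  · rw [Nat.choose_eq_zero_of_lt (by simpa using h)]
    simp

theorem reflect_pow {R : Type*} [Semiring R] {p : R[X]} {N : ℕ} (hp : p.natDegree ≤ N)
    (k : ℕ) : reflect (k * N) (p ^ k) = reflect N p ^ k := by
  induction k with
  | zero => simp
  | succ k ih =>
    rw [pow_succ, add_one_mul, reflect_mul _ _ (natDegree_pow_le_of_le k hp) hp, ih, pow_succ]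

theorem reflect_one_sub_X_pow_mul_one_add_X_pow {R : Type*} [CommRing R] (r s : ℕ) :
    reflect (r + s) ((1 - X : R[X]) ^ r * (1 + X) ^ s) =
      (-1) ^ r * ((1 - X) ^ r * (1 + X) ^ s) := by
  have h₁ : (1 - X : R[X]).natDegree ≤ 1 :=
    (natDegree_sub_le _ _).trans (max_le (by simp) natDegree_X_le)
  have h₂ : (1 + X : R[X]).natDegree ≤ 1 :=
    (natDegree_add_le _ _).trans (max_le (by simp) natDegree_X_le)
  have hA : reflect r ((1 - X : R[X]) ^ r) = (X - 1) ^ r := by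
    simpa using reflect_pow h₁ r
  have hB : reflect s ((1 + X : R[X]) ^ s) = (X + 1) ^ s := by
    simpa using reflect_pow h₂ s
  rw [reflect_mul _ _ (by simpa using natDegree_pow_le_of_le r h₁)
    (by simpa using natDegree_pow_le_of_le s h₂), hA, hB, ← mul_assoc, ← mul_pow, neg_one_mul,
    neg_sub, add_comm X]

end Polynomial

theorem binKraw_eq_coeff (n ℓ r : ℕ) :
    binKraw n ℓ r = ((1 - X : ℤ[X]) ^ r * (1 + X) ^ (n - r)).coeff ℓ := by
  rw [coeff_mul, Finset.Nat.sum_antidiagonal_eq_sum_range_succ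
    (fun i k => ((1 - X : ℤ[X]) ^ r).coeff i * ((1 + X) ^ (n - r)).coeff k), binKraw]
  simp only [coeff_one_sub_X_pow, coeff_one_add_X_pow]

theorem binKraw_succ_succ_succ (n ℓ r : ℕ) :
    binKraw (n + 1) (ℓ + 1) (r + 1) = binKraw n (ℓ + 1) r - binKraw n ℓ r := by
  have h : (1 - X : ℤ[X]) ^ (r + 1) * (1 + X) ^ (n - r) =
      (1 - X) * ((1 - X) ^ r * (1 + X) ^ (n - r)) := by
    ring
  rw [binKraw_eq_coeff, Nat.add_sub_add_right, h, sub_mul, one_mul, coeff_sub, coeff_X_mul,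
    binKraw_eq_coeff, binKraw_eq_coeff]

theorem binKraw_succ_succ {n r : ℕ} (h : r ≤ n) (ℓ : ℕ) :
    binKraw (n + 1) (ℓ + 1) r = binKraw n (ℓ + 1) r + binKraw n ℓ r := by
  have h' : (1 - X : ℤ[X]) ^ r * (1 + X) ^ (n - r + 1) =
      (1 + X) * ((1 - X) ^ r * (1 + X) ^ (n - r)) := by
    ring
  rw [binKraw_eq_coeff, Nat.sub_add_comm h, h', add_mul, one_mul, coeff_add, coeff_X_mul,
    binKraw_eq_coeff, binKraw_eq_coeff]

theorem binKraw_sub_degree {n ℓ r : ℕ} (hℓ : ℓ ≤ n) (hr : r ≤ n) :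
    binKraw n (n - ℓ) r = (-1) ^ r * binKraw n ℓ r := by
  have h := congrArg (coeff · ℓ) (reflect_one_sub_X_pow_mul_one_add_X_pow (R := ℤ) r (n - r))
  simp only [Nat.add_sub_cancel' hr, coeff_reflect, revAt_le hℓ] at h
  rw [binKraw_eq_coeff, binKraw_eq_coeff, h, show (-1 : ℤ[X]) ^ r = C ((-1) ^ r) by simp,
    coeff_C_mul]

theorem binKraw_two_mul_self_eq_zero {ℓ r : ℕ} (hr : Odd r) (hrℓ : r ≤ 2 * ℓ) :
    binKraw (2 * ℓ) ℓ r = 0 := by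
  have h := binKraw_sub_degree (show ℓ ≤ 2 * ℓ by omega) hrℓ
  rwa [show 2 * ℓ - ℓ = ℓ by omega, hr.neg_one_pow, neg_one_mul, self_eq_neg] at h

theorem binKraw_abs_eq_general (t j : ℕ)
    (hj2 : 4 * j + 2 ≤ 4 * t - 1) :
    |binKraw (4 * t - 1) (2 * t) (4 * j + 2)| = |binKraw (4 * t - 1) (2 * t) (4 * j + 1)| := by
  obtain ⟨s, rfl⟩ : ∃ s, t = s + 1 := ⟨t - 1, by omega⟩
  have hn : 4 * (s + 1) - 1 = 2 * (2 * s + 1) + 1 := by omega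
  have hmid : binKraw (2 * (2 * s + 1)) (2 * s + 1) (4 * j + 1) = 0 :=
    binKraw_two_mul_self_eq_zero ⟨2 * j, by ring⟩ (by omega)
  rw [hn, mul_add_one 2 s, binKraw_succ_succ_succ, binKraw_succ_succ (by omega), hmid, sub_zero,
    add_zero]

/-- `|K_{2t}^{4t-1}(4j+2)| = |K_{2t}^{4t-1}(4j+1)|` for `0 ≤ j ≤ ⌊t/2⌋`
with `4j+2 ≤ 4t-1`. -/
theorem binKraw_abs_eq (t j : ℕ) (ht : 1 ≤ t) (hj : j ≤ t / 2)
    (hj2 : 4 * j + 2 ≤ 4 * t - 1) :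
    |binKraw (4 * t - 1) (2 * t) (4 * j + 2)| = |binKraw (4 * t - 1) (2 * t) (4 * j + 1)| :=
  binKraw_abs_eq_general t j hj2
end

section
/- Let 4 | n, x, y ∈ F_2^n with Hamming distance d(x,y) = n/2, and for 0 ≤ α ≤ n-1 define P_x^α(i,j) = (1/n) ξ^{(j-i)α} (-1)^{x_i+x_j} with ξ = e^{2πi/n}. Then P_x^α P_y^α = 0 for every α. Key step: Σ_{k=0}^{n-1} (-1)^{x_k+y_k} = 0 when d(x,y) = n/2. -/
open Complex

/-- Hamming distance between binary vectors. -/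
def hdist {n : ℕ} (x y : Fin n → ZMod 2) : ℕ :=
  (Finset.univ.filter (fun i => x i ≠ y i)).card

/-- The projection matrices `P_x^α(i,j) = (1/n) ξ^{(j-i)α} (-1)^{x_i+x_j}`,
where `ξ = e^{2πi/n}`. -/
noncomputable def projMat (n : ℕ) (x : Fin n → ZMod 2) (α : ℕ) :
    Matrix (Fin n) (Fin n) ℂ :=
  Matrix.of fun i j =>
    (1 / n : ℂ) * Complex.exp (2 * Real.pi * Complex.I / n) ^ (((j : ℤ) - (i : ℤ)) * α)
      * (-1 : ℂ) ^ ((x i).val + (x j).val)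

/-! In the entry `(P_x^α P_y^α)_{ij} = Σ_k P_x^α(i,k) P_y^α(k,j)` the phases telescope,
`ξ^{(k-i)α} ξ^{(j-k)α} = ξ^{(j-i)α}`, so the entry is a multiple of
`Σ_k (-1)^{x_k+y_k} = n - 2 d(x,y)`, which vanishes when `d(x,y) = n/2`. -/

theorem neg_one_pow_val_add_val {R : Type*} [Ring R] (a b : ZMod 2) :
    (-1 : R) ^ (a.val + b.val) = 1 - 2 * if a ≠ b then 1 else 0 := by
  have h : (-1 : ℤ) ^ (a.val + b.val) = 1 - 2 * if a ≠ b then 1 else 0 := by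
    revert a b; decide
  exact_mod_cast congrArg (Int.cast : ℤ → R) h

theorem sum_neg_one_pow_eq_sub_hdist {R : Type*} [Ring R] {n : ℕ} (x y : Fin n → ZMod 2) :
    ∑ k, (-1 : R) ^ ((x k).val + (y k).val) = n - 2 * hdist x y := by
  simp only [neg_one_pow_val_add_val, Finset.sum_sub_distrib, ← Finset.mul_sum,
    Finset.sum_boole, hdist]
  simp

theorem sum_neg_one_pow_eq_zero_of_hdist_eq_half {R : Type*} [Ring R] {n : ℕ} (hn : Even n)
    {x y : Fin n → ZMod 2} (hxy : hdist x y = n / 2) :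
    ∑ k, (-1 : R) ^ ((x k).val + (y k).val) = 0 := by
  obtain ⟨m, rfl⟩ := hn
  rw [sum_neg_one_pow_eq_sub_hdist, hxy, ← two_mul, Nat.mul_div_cancel_left m two_pos]
  push_cast
  exact sub_eq_zero.mpr (by rw [two_mul])

theorem projMat_mul_projMat_apply (n : ℕ) (x y : Fin n → ZMod 2) (α : ℕ) (i j : Fin n) :
    (projMat n x α * projMat n y α) i j =
      (1 / n : ℂ) ^ 2 * Complex.exp (2 * Real.pi * Complex.I / n) ^ (((j : ℤ) - i) * α) *
        (-1 : ℂ) ^ ((x i).val + (y j).val) * ∑ k, (-1 : ℂ) ^ ((x k).val + (y k).val) := by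
  have hξ : Complex.exp (2 * Real.pi * Complex.I / n) ≠ 0 := Complex.exp_ne_zero _
  simp only [Matrix.mul_apply, projMat, Matrix.of_apply, Finset.mul_sum]
  refine Finset.sum_congr rfl fun k _ => ?_
  rw [show ((j : ℤ) - i) * α = ((k : ℤ) - i) * α + ((j : ℤ) - k) * α by ring, zpow_add₀ hξ]
  ring

theorem projMat_orthogonal_of_hadamard_adjacent_general (n : ℕ) (hn4 : 4 ∣ n)
    (x y : Fin n → ZMod 2) (hxy : hdist x y = n / 2) :
    (∑ k : Fin n, (-1 : ℤ) ^ ((x k).val + (y k).val) = 0) ∧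
    (∀ α : ℕ, α ≤ n - 1 → projMat n x α * projMat n y α = 0) := by
  have hn : Even n := even_iff_two_dvd.mpr (dvd_trans (by norm_num) hn4)
  refine ⟨sum_neg_one_pow_eq_zero_of_hdist_eq_half hn hxy, fun α _ => ?_⟩
  ext i j
  rw [projMat_mul_projMat_apply, sum_neg_one_pow_eq_zero_of_hdist_eq_half hn hxy, mul_zero,
    Matrix.zero_apply]

/-- If `4 | n` and `d(x,y) = n/2` then `∑_k (-1)^{x_k+y_k} = 0` and
`P_x^α P_y^α = 0` for every `α`: the projections give a quantum `n`-coloring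
of the Hadamard graph `H_n`. -/
theorem projMat_orthogonal_of_hadamard_adjacent (n : ℕ) (hn4 : 4 ∣ n) (hn : 0 < n)
    (x y : Fin n → ZMod 2) (hxy : hdist x y = n / 2) :
    (∑ k : Fin n, (-1 : ℤ) ^ ((x k).val + (y k).val) = 0) ∧
    (∀ α : ℕ, α ≤ n - 1 → projMat n x α * projMat n y α = 0) :=
  projMat_orthogonal_of_hadamard_adjacent_general n hn4 x y hxy
end
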